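/- If B is a nontrivial subloop of a Cayley-Dickson loop Q_n and x ∈ Q_n \ B, then the subloop generated by B and x has order exactly 2|B|. -/

import Mathlib

/-- The underlying set of the Cayley-Dickson loop `Q n`:
`Q 0 = {±1}` (encoded as `Bool`, `false = 1`, `true = -1`) and `Q (n+1) = Q n × Bool`,
an element `(x, b)` encoding `(x, 0)` if `b = false` and `(x, 1)` if `b = true`. -/
def Q : ℕ → Type
  | 0 => Bool
  | n+1 => Q n × Bool

namespace Q

def one : ∀ n, Q n
  | 0 => false
  | n+1 => (one n, false)

def neg : ∀ n, Q n → Q n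
  | 0, x => !x
  | n+1, (x, b) => (neg n x, b)

def conj : ∀ n, Q n → Q n
  | 0, x => x
  | n+1, (x, false) => (conj n x, false)
  | n+1, (x, true) => (neg n x, true)

/-- Cayley-Dickson doubling multiplication restricted to the loop:
`(x,0)(y,0) = (xy,0)`, `(x,0)(y,1) = (yx,1)`, `(x,1)(y,0) = (xy*,1)`, `(x,1)(y,1) = (-y*x,0)`. -/
def mul : ∀ n, Q n → Q n → Q n
  | 0, x, y => xor x y
  | n+1, (x, false), (y, false) => (mul n x y, false)
  | n+1, (x, false), (y, true)  => (mul n y x, true)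
  | n+1, (x, true),  (y, false) => (mul n x (conj n y), true)
  | n+1, (x, true),  (y, true)  => (neg n (mul n (conj n y) x), false)

instance (n : ℕ) : One (Q n) := ⟨one n⟩
instance (n : ℕ) : Neg (Q n) := ⟨neg n⟩
instance (n : ℕ) : Mul (Q n) := ⟨mul n⟩
instance (n : ℕ) : Star (Q n) := ⟨conj n⟩
/-- In `Q n` the inverse of `x` is its conjugate `x*`. -/
instance (n : ℕ) : Inv (Q n) := ⟨conj n⟩

instance instDecEq : ∀ n, DecidableEq (Q n)
  | 0 => inferInstanceAs (DecidableEq Bool)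
  | n+1 => letI := instDecEq n; inferInstanceAs (DecidableEq (Q n × Bool))

instance instFintype : ∀ n, Fintype (Q n)
  | 0 => inferInstanceAs (Fintype Bool)
  | n+1 => letI := instFintype n; inferInstanceAs (Fintype (Q n × Bool))

/-- Powers in `Q n` (well defined by diassociativity). -/
def pow {n : ℕ} (x : Q n) : ℕ → Q n
  | 0 => 1
  | k+1 => x * pow x k

/-- The embedding `x ↦ (x, 0)` of `Q n` into `Q (n+1)`. -/
def up {n : ℕ} (x : Q n) : Q (n+1) := (x, false)

/-- The map `x ↦ (x, 1)` from `Q n` into `Q (n+1)`. -/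
def up1 {n : ℕ} (x : Q n) : Q (n+1) := (x, true)

/-- The commutator `[x,y]`, defined by `xy = (yx)[x,y]`. -/
def comm {n : ℕ} (x y : Q n) : Q n := (y * x)⁻¹ * (x * y)

/-- The associator `[x,y,z]`, defined by `(xy)z = (x(yz))[x,y,z]`. -/
def assoc {n : ℕ} (x y z : Q n) : Q n := (x * (y * z))⁻¹ * ((x * y) * z)

/-- A subloop of the Cayley-Dickson loop `Q n`: a subset containing `1` and closed
under multiplication and inverses (= conjugates). -/
structure Subloop (n : ℕ) where
  carrier : Set (Q n)
  one_mem : (1 : Q n) ∈ carrier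
  mul_mem : ∀ ⦃x y : Q n⦄, x ∈ carrier → y ∈ carrier → x * y ∈ carrier
  inv_mem : ∀ ⦃x : Q n⦄, x ∈ carrier → x⁻¹ ∈ carrier

/-- The subloop of `Q n` generated by a set `s`. -/
def closure (n : ℕ) (s : Set (Q n)) : Set (Q n) :=
  ⋂₀ {t : Set (Q n) | s ⊆ t ∧ (1 : Q n) ∈ t ∧
      (∀ x ∈ t, ∀ y ∈ t, x * y ∈ t) ∧ (∀ x ∈ t, x⁻¹ ∈ t)}

end Q

/-!
Modulo the central subgroup `{1, -1}`, the loop `Q n` becomes the elementary abelian group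
`(ℤ/2)^n` (`modSign`), and two elements have the same image exactly when they agree up to sign.
A nontrivial subloop `B` contains `-1`, because the square of any `a ≠ ±1` is `-1`; so membership
in `B` only depends on the image in `(ℤ/2)^n`, where everything commutes and associates. Computing
there shows that `B ∪ Bx` is closed under products and inverses, hence is the subloop generated
by `B` and `x`. The union is disjoint since `x ∉ B`, and `b ↦ bx` is injective.
-/

namespace Q

open Matrix (vecCons)

protected theorem neg_neg : ∀ {n} (a : Q n), - -a = a
  | 0, a => by cases a <;> rfl
  | _+1, (a, b) => congrArg (·, b) (Q.neg_neg a)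

theorem neg_ne_self : ∀ {n} (a : Q n), -a ≠ a
  | 0, a => Bool.not_ne_self a
  | _+1, (a, _) => fun h => neg_ne_self a (congrArg Prod.fst h)

protected theorem inv_one : ∀ {n}, (1 : Q n)⁻¹ = 1
  | 0 => rfl
  | _+1 => congrArg (·, false) Q.inv_one

protected theorem inv_neg : ∀ {n} (a : Q n), (-a)⁻¹ = -a⁻¹
  | 0, _ => rfl
  | _+1, (a, false) => congrArg (·, false) (Q.inv_neg a)
  | _+1, (_, true) => rfl

protected theorem mul_one : ∀ {n} (a : Q n), a * 1 = a
  | 0, a => by cases a <;> rfl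
  | _+1, (a, false) => congrArg (·, false) (Q.mul_one a)
  | _+1, (a, true) => by
    show ((a * (1 : Q _)⁻¹, true) : Q (_+1)) = (a, true)
    rw [Q.inv_one, Q.mul_one]

protected theorem one_mul : ∀ {n} (a : Q n), 1 * a = a
  | 0, a => by cases a <;> rfl
  | _+1, (a, false) => congrArg (·, false) (Q.one_mul a)
  | _+1, (a, true) => congrArg (·, true) (Q.mul_one a)

mutual

protected theorem neg_mul : ∀ {n} (a b : Q n), -a * b = -(a * b)
  | 0, a, b => by cases a <;> cases b <;> rfl
  | _+1, (a, false), (b, false) => congrArg (·, false) (Q.neg_mul a b)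
  | _+1, (a, false), (b, true) => congrArg (·, true) (Q.mul_neg b a)
  | _+1, (a, true), (b, false) => congrArg (·, true) (Q.neg_mul a b⁻¹)
  | _+1, (a, true), (b, true) => congrArg (fun c => (-c, false)) (Q.mul_neg b⁻¹ a)

protected theorem mul_neg : ∀ {n} (a b : Q n), a * -b = -(a * b)
  | 0, a, b => by cases a <;> cases b <;> rfl
  | _+1, (a, false), (b, false) => congrArg (·, false) (Q.mul_neg a b)
  | _+1, (a, false), (b, true) => congrArg (·, true) (Q.neg_mul b a)
  | _+1, (a, true), (b, false) => by
    show ((a * (-b)⁻¹, true) : Q (_+1)) = (-(a * b⁻¹), true)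
    rw [Q.inv_neg, Q.mul_neg]
  | _+1, (a, true), (b, true) => by
    show ((-((-b)⁻¹ * a), false) : Q (_+1)) = (- -(b⁻¹ * a), false)
    rw [Q.inv_neg, Q.neg_mul]

end

protected theorem inv_mul_cancel : ∀ {n} (a : Q n), a⁻¹ * a = 1
  | 0, a => by cases a <;> rfl
  | _+1, (a, false) => congrArg (·, false) (Q.inv_mul_cancel a)
  | _+1, (a, true) => by
    show ((-(a⁻¹ * -a), false) : Q (_+1)) = (1, false)
    rw [Q.mul_neg, Q.neg_neg, Q.inv_mul_cancel]

theorem eq_one_or_eq_neg_one_of_mul_self_eq_one : ∀ {n} {a : Q n}, a * a = 1 → a = 1 ∨ a = -1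
  | 0, false, _ => .inl rfl
  | 0, true, _ => .inr rfl
  | _+1, (a, false), h =>
    (eq_one_or_eq_neg_one_of_mul_self_eq_one (congrArg Prod.fst h)).imp
      (congrArg (·, false)) (congrArg (·, false))
  | _+1, (a, true), h => by
    have h1 : -(a⁻¹ * a) = 1 := congrArg Prod.fst h
    rw [Q.inv_mul_cancel] at h1
    exact absurd h1 (neg_ne_self 1)

/-- The quotient map `Q n → Q n / {1, -1} ≅ (ℤ/2)^n`: the coordinate added by the doubling
`Q (n+1) = Q n × Bool` becomes the first entry. -/
def modSign : ∀ {n}, Q n → Fin n → ZMod 2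
  | 0, _ => ![]
  | _+1, (a, false) => vecCons 0 (modSign a)
  | _+1, (a, true) => vecCons 1 (modSign a)

theorem modSign_one : ∀ {n}, modSign (1 : Q n) = 0
  | 0 => Subsingleton.elim _ _
  | _+1 => by
    show vecCons 0 (modSign (1 : Q _)) = 0
    rw [modSign_one, Matrix.cons_zero_zero]

theorem modSign_neg : ∀ {n} (a : Q n), modSign (-a) = modSign a
  | 0, _ => Subsingleton.elim _ _
  | _+1, (a, false) => congrArg (vecCons 0) (modSign_neg a)
  | _+1, (a, true) => congrArg (vecCons 1) (modSign_neg a)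

theorem modSign_inv : ∀ {n} (a : Q n), modSign a⁻¹ = modSign a
  | 0, _ => Subsingleton.elim _ _
  | _+1, (a, false) => congrArg (vecCons 0) (modSign_inv a)
  | _+1, (a, true) => congrArg (vecCons 1) (modSign_neg a)

theorem modSign_mul : ∀ {n} (a b : Q n), modSign (a * b) = modSign a + modSign b
  | 0, _, _ => Subsingleton.elim _ _
  | _+1, (a, false), (b, false) => by
    show vecCons 0 (modSign (a * b)) = vecCons 0 (modSign a) + vecCons 0 (modSign b)
    rw [Matrix.cons_add_cons, modSign_mul, zero_add]
  | _+1, (a, false), (b, true) => by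
    show vecCons 1 (modSign (b * a)) = vecCons 0 (modSign a) + vecCons 1 (modSign b)
    rw [Matrix.cons_add_cons, modSign_mul, zero_add, add_comm]
  | _+1, (a, true), (b, false) => by
    show vecCons 1 (modSign (a * b⁻¹)) = vecCons 1 (modSign a) + vecCons 0 (modSign b)
    rw [Matrix.cons_add_cons, modSign_mul, modSign_inv, add_zero]
  | _+1, (a, true), (b, true) => by
    show vecCons 0 (modSign (-(b⁻¹ * a))) = vecCons 1 (modSign a) + vecCons 1 (modSign b)
    rw [Matrix.cons_add_cons, modSign_neg, modSign_mul, modSign_inv, add_comm (modSign b)]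
    rfl

theorem modSign_add_self {n : ℕ} (a : Q n) : modSign a + modSign a = 0 :=
  funext fun i => CharTwo.add_self_eq_zero (modSign a i)

theorem eq_or_eq_neg_of_modSign_eq : ∀ {n} {a b : Q n}, modSign a = modSign b → a = b ∨ a = -b
  | 0, false, false, _ | 0, true, true, _ => .inl rfl
  | 0, false, true, _ | 0, true, false, _ => .inr rfl
  | _+1, (a, false), (b, false), h =>
    (eq_or_eq_neg_of_modSign_eq (Matrix.vecCons_inj.1
      (show vecCons 0 (modSign a) = vecCons 0 (modSign b) from h)).2).imp
      (congrArg (·, false)) (congrArg (·, false))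
  | _+1, (a, true), (b, true), h =>
    (eq_or_eq_neg_of_modSign_eq (Matrix.vecCons_inj.1
      (show vecCons 1 (modSign a) = vecCons 1 (modSign b) from h)).2).imp
      (congrArg (·, true)) (congrArg (·, true))
  | _+1, (a, false), (b, true), h =>
    absurd (Matrix.vecCons_inj.1 (show vecCons 0 (modSign a) = vecCons 1 (modSign b) from h)).1
      (by decide)
  | _+1, (a, true), (b, false), h =>
    absurd (Matrix.vecCons_inj.1 (show vecCons 1 (modSign a) = vecCons 0 (modSign b) from h)).1
      (by decide)

variable {n : ℕ}

theorem mul_left_injective (x : Q n) : Function.Injective (· * x) := by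
  intro a b (h : a * x = b * x)
  have hab : modSign a = modSign b := by
    simpa only [modSign_mul, add_left_inj] using congrArg modSign h
  refine (eq_or_eq_neg_of_modSign_eq hab).resolve_right fun hneg => ?_
  rw [hneg, Q.neg_mul] at h
  exact neg_ne_self _ h

theorem subset_closure (s : Set (Q n)) : s ⊆ closure n s :=
  fun _ ha => Set.mem_sInter.2 fun _ ht => ht.1 ha

theorem closure_subset {s t : Set (Q n)} (hst : s ⊆ t) (one_mem : (1 : Q n) ∈ t)
    (mul_mem : ∀ x ∈ t, ∀ y ∈ t, x * y ∈ t) (inv_mem : ∀ x ∈ t, x⁻¹ ∈ t) :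
    closure n s ⊆ t :=
  Set.sInter_subset_of_mem ⟨hst, one_mem, mul_mem, inv_mem⟩

theorem mul_mem_closure {s : Set (Q n)} {a b : Q n} (ha : a ∈ closure n s)
    (hb : b ∈ closure n s) : a * b ∈ closure n s :=
  Set.mem_sInter.2 fun t ht =>
    ht.2.2.1 a (Set.mem_sInter.1 ha t ht) b (Set.mem_sInter.1 hb t ht)

namespace Subloop

variable (B : Subloop n)

theorem neg_one_mem (hB : B.carrier ≠ {1}) : (-1 : Q n) ∈ B.carrier := by
  obtain ⟨a, ha, ha1⟩ : ∃ a ∈ B.carrier, a ≠ 1 := by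
    by_contra! h
    exact hB (Set.eq_singleton_iff_unique_mem.2 ⟨B.one_mem, h⟩)
  have hsq : modSign (a * a) = modSign (1 : Q n) := by
    rw [modSign_mul, modSign_add_self, modSign_one]
  rcases eq_or_eq_neg_of_modSign_eq hsq with h | h
  · rcases eq_one_or_eq_neg_one_of_mul_self_eq_one h with h' | h'
    · exact absurd h' ha1
    · exact h' ▸ ha
  · exact h ▸ B.mul_mem ha ha

theorem neg_mem (hB : B.carrier ≠ {1}) {a : Q n} (ha : a ∈ B.carrier) : -a ∈ B.carrier := by
  simpa only [Q.neg_mul, Q.one_mul] using B.mul_mem (B.neg_one_mem hB) ha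

theorem mem_of_modSign_eq (hB : B.carrier ≠ {1}) {a b : Q n} (h : modSign a = modSign b)
    (hb : b ∈ B.carrier) : a ∈ B.carrier := by
  rcases eq_or_eq_neg_of_modSign_eq h with rfl | rfl
  exacts [hb, B.neg_mem hB hb]

theorem mem_image_mul_right_of_modSign_eq (hB : B.carrier ≠ {1}) {x a c : Q n}
    (hc : c ∈ B.carrier) (h : modSign a = modSign (c * x)) : a ∈ (· * x) '' B.carrier := by
  rcases eq_or_eq_neg_of_modSign_eq h with rfl | rfl
  exacts [⟨c, hc, rfl⟩, ⟨-c, B.neg_mem hB hc, Q.neg_mul c x⟩]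

def unionRightCoset (x : Q n) : Set (Q n) := B.carrier ∪ (· * x) '' B.carrier

theorem mul_mem_unionRightCoset (hB : B.carrier ≠ {1}) {x p q : Q n}
    (hp : p ∈ B.unionRightCoset x) (hq : q ∈ B.unionRightCoset x) :
    p * q ∈ B.unionRightCoset x := by
  rcases hp with hb | ⟨b, hb, rfl⟩ <;> rcases hq with hc | ⟨c, hc, rfl⟩
  · exact .inl (B.mul_mem hb hc)
  · refine .inr (B.mem_image_mul_right_of_modSign_eq hB (B.mul_mem hb hc) ?_)
    simp only [modSign_mul, add_assoc]
  · refine .inr (B.mem_image_mul_right_of_modSign_eq hB (B.mul_mem hb hc) ?_)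
    simp only [modSign_mul, add_right_comm]
  · refine .inl (B.mem_of_modSign_eq hB ?_ (B.mul_mem hb hc))
    simp only [modSign_mul]
    rw [add_add_add_comm, modSign_add_self, add_zero]

theorem inv_mem_unionRightCoset (hB : B.carrier ≠ {1}) {x p : Q n}
    (hp : p ∈ B.unionRightCoset x) : p⁻¹ ∈ B.unionRightCoset x := by
  rcases hp with hb | ⟨b, hb, rfl⟩
  · exact .inl (B.inv_mem hb)
  · exact .inr (B.mem_image_mul_right_of_modSign_eq hB hb (modSign_inv _))

theorem closure_union_singleton (hB : B.carrier ≠ {1}) (x : Q n) :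
    closure n (B.carrier ∪ {x}) = B.unionRightCoset x := by
  have hxU : x ∈ B.unionRightCoset x := .inr ⟨1, B.one_mem, Q.one_mul x⟩
  refine (closure_subset ?_ (.inl B.one_mem) (fun _ hp _ hq => B.mul_mem_unionRightCoset hB hp hq)
    (fun _ hp => B.inv_mem_unionRightCoset hB hp)).antisymm ?_
  · rintro p (hp | rfl)
    exacts [.inl hp, hxU]
  · rintro p (hp | ⟨b, hb, rfl⟩)
    · exact subset_closure _ (.inl hp)
    · exact mul_mem_closure (subset_closure _ (.inl hb)) (subset_closure _ (.inr rfl))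

theorem disjoint_image_mul_right (hB : B.carrier ≠ {1}) {x : Q n} (hx : x ∉ B.carrier) :
    Disjoint B.carrier ((· * x) '' B.carrier) := by
  refine Set.disjoint_left.2 fun a ha ⟨c, hc, hca⟩ => hx ?_
  refine B.mem_of_modSign_eq hB ?_ (B.mul_mem (B.inv_mem hc) ha)
  rw [modSign_mul, modSign_inv, ← hca, modSign_mul, ← add_assoc, modSign_add_self, zero_add]

theorem ncard_unionRightCoset (hB : B.carrier ≠ {1}) {x : Q n} (hx : x ∉ B.carrier) :
    (B.unionRightCoset x).ncard = 2 * B.carrier.ncard := by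
  rw [unionRightCoset, Set.ncard_union_eq (B.disjoint_image_mul_right hB hx),
    (mul_left_injective x).injOn.ncard_image, two_mul]

end Subloop

end Q

/-- If `B` is a nontrivial subloop of `Q n` and `x ∈ Q n \ B`, then the subloop
generated by `B` and `x` has order exactly `2|B|`. -/
theorem Q.closure_insert_card (n : ℕ) (B : Q.Subloop n) (hB : B.carrier ≠ {1})
    (x : Q n) (hx : x ∉ B.carrier) :
    (Q.closure n (B.carrier ∪ {x})).ncard = 2 * B.carrier.ncard := by
  rw [B.closure_union_singleton hB x, B.ncard_unionRightCoset hB hx]
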